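/- arXiv:2004.10192 — 6 statements merged into one kernel-verified Lean document; each statement's English description precedes it below -/
import Mathlib

section
/- For every integer n with 2 ≤ n ≤ 8, the complete coloring number of the n×n square grid graph equals 2n−1, i.e., Γ(G_n) = 2n−1. -/
/-- The rectangular grid graph `R_{m×n}`: vertices are pairs `(i,j)` with
`i < m`, `j < n`, adjacent iff they differ by exactly one in exactly one
coordinate. -/
def gridGraph (m n : ℕ) : SimpleGraph (Fin m × Fin n) where
  Adj p q := (p.1 = q.1 ∧ ((p.2 : ℕ) + 1 = q.2 ∨ (q.2 : ℕ) + 1 = p.2)) ∨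
             (p.2 = q.2 ∧ ((p.1 : ℕ) + 1 = q.1 ∨ (q.1 : ℕ) + 1 = p.1))
  symm := by
    constructor
    rintro p q (⟨h, h'⟩ | ⟨h, h'⟩)
    · exact Or.inl ⟨h.symm, h'.symm⟩
    · exact Or.inr ⟨h.symm, h'.symm⟩
  loopless := by
    constructor
    rintro p (⟨_, h | h⟩ | ⟨_, h | h⟩) <;> omega

/-- `c` is a `k`-complete coloring of `G`: every pair of distinct colors appears
on some edge. -/
def IsCompleteColoring {V : Type*} (G : SimpleGraph V) (k : ℕ) (c : V → Fin k) : Prop :=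
  ∀ i j : Fin k, i ≠ j → ∃ u v, G.Adj u v ∧ c u = i ∧ c v = j

/-- `c` is a `k`-complete proper coloring of `G`. -/
def IsCompleteProperColoring {V : Type*} (G : SimpleGraph V) (k : ℕ) (c : V → Fin k) : Prop :=
  IsCompleteColoring G k c ∧ ∀ u v, G.Adj u v → c u ≠ c v

/-- The complete coloring number `Γ(G)`: the maximum `k` admitting a
`k`-complete coloring. -/
noncomputable def completeColoringNumber {V : Type*} (G : SimpleGraph V) : ℕ :=
  sSup {k | ∃ c : V → Fin k, IsCompleteColoring G k c}

/-- The achromatic number `Ψ(G)`: the maximum `k` admitting a `k`-complete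
proper coloring. -/
noncomputable def achromaticNumber {V : Type*} (G : SimpleGraph V) : ℕ :=
  sSup {k | ∃ c : V → Fin k, IsCompleteProperColoring G k c}

/-!
In a complete `k`-colouring every ordered pair of distinct colours is realised by a dart, so
`k (k - 1)` is at most the number of darts. The `n × n` grid is the box product of two paths and
has `4 n (n - 1)` darts, which forces `k ≤ 2 n - 1`. For `2 ≤ n ≤ 8` the bound is attained by the
explicit colourings below, checked by evaluation in the kernel.
-/

open SimpleGraph Finset

instance (m n : ℕ) : DecidableRel (gridGraph m n).Adj := fun _ _ =>
  inferInstanceAs (Decidable (_ ∨ _))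

theorem completeColoringNumber_eq_of_forall_le {V : Type*} {G : SimpleGraph V} {k : ℕ}
    (hk : ∃ c, IsCompleteColoring G k c)
    (hle : ∀ j (c : V → Fin j), IsCompleteColoring G j c → j ≤ k) :
    completeColoringNumber G = k :=
  IsGreatest.csSup_eq ⟨hk, fun _ ⟨c, hc⟩ => hle _ c hc⟩

theorem isCompleteColoring_iff_forall_exists_dart {V : Type*} {G : SimpleGraph V} {k : ℕ}
    {c : V → Fin k} :
    IsCompleteColoring G k c ↔ ∀ i j, i ≠ j → ∃ d : G.Dart, c d.fst = i ∧ c d.snd = j :=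
  forall₂_congr fun _ _ => imp_congr_right fun _ =>
    ⟨fun ⟨u, v, h, hu, hv⟩ => ⟨⟨(u, v), h⟩, hu, hv⟩, fun ⟨d, hu, hv⟩ => ⟨_, _, d.adj, hu, hv⟩⟩

theorem IsCompleteColoring.mul_sub_one_le_card_dart {V : Type*} [Finite V] {G : SimpleGraph V}
    {k : ℕ} {c : V → Fin k} (hc : IsCompleteColoring G k c) :
    k * (k - 1) ≤ Nat.card G.Dart := by
  classical
  have := Fintype.ofFinite V
  have hsurj : Set.SurjOn (fun d : G.Dart => (c d.fst, c d.snd)) (univ : Finset G.Dart)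
      (univ : Finset (Fin k)).offDiag := by
    rintro ⟨i, j⟩ hij
    obtain ⟨d, hi, hj⟩ := isCompleteColoring_iff_forall_exists_dart.1 hc i j (by simpa using hij)
    exact ⟨d, mem_coe.2 (mem_univ _), by simp [hi, hj]⟩
  simpa [offDiag_card, Nat.mul_sub_one] using card_le_card_of_surjOn _ hsurj

theorem card_dart_boxProd {α β : Type*} [Finite α] [Finite β]
    (G : SimpleGraph α) (H : SimpleGraph β) :
    Nat.card (G □ H).Dart = Nat.card β * Nat.card G.Dart + Nat.card α * Nat.card H.Dart := by
  classical
  have := Fintype.ofFinite α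
  have := Fintype.ofFinite β
  have hsum (f : α → ℕ) (g : β → ℕ) : ∑ x : α × β, (f x.1 + g x.2) =
      Fintype.card β * ∑ a, f a + Fintype.card α * ∑ b, g b := by
    simp [Fintype.sum_prod_type, sum_add_distrib, mul_sum]
  simp only [Nat.card_eq_fintype_card, dart_card_eq_sum_degrees, ← hsum]
  exact sum_congr rfl fun x _ => by convert degree_boxProd x

theorem card_edgeFinset_pathGraph_succ (m : ℕ) [Fintype (pathGraph (m + 1)).edgeSet] :
    #(pathGraph (m + 1)).edgeFinset = m := by
  have hinj : Function.Injective fun i : Fin m => s(i.castSucc, i.succ) := fun i j h => by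
    simp only [Sym2.eq_iff, Fin.ext_iff, Fin.val_castSucc, Fin.val_succ] at h
    exact Fin.ext (by omega)
  have hedges : (pathGraph (m + 1)).edgeFinset =
      univ.image fun i : Fin m => s(i.castSucc, i.succ) := by
    ext e
    induction e using Sym2.ind with
    | _ a b =>
      simp only [mem_edgeFinset, mem_edgeSet, pathGraph_adj, mem_image, mem_univ, true_and,
        Sym2.eq_iff, Fin.ext_iff, Fin.val_castSucc, Fin.val_succ]
      constructor
      · rintro (h | h)
        · exact ⟨⟨a, by omega⟩, Or.inl ⟨rfl, h⟩⟩
        · exact ⟨⟨b, by omega⟩, Or.inr ⟨rfl, h⟩⟩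
      · rintro ⟨i, ⟨ha, hb⟩ | ⟨hb, ha⟩⟩ <;> omega
  rw [hedges, card_image_of_injective _ hinj, card_univ, Fintype.card_fin]

theorem card_dart_pathGraph (n : ℕ) : Nat.card (pathGraph n).Dart = 2 * (n - 1) := by
  classical
  cases n with
  | zero =>
    have : IsEmpty (pathGraph 0).Dart := ⟨fun d => d.fst.elim0⟩
    exact Nat.card_of_isEmpty
  | succ m =>
    rw [Nat.card_eq_fintype_card, dart_card_eq_twice_card_edges, card_edgeFinset_pathGraph_succ,
      Nat.add_sub_cancel]

theorem gridGraph_eq_boxProd (m n : ℕ) : gridGraph m n = pathGraph m □ pathGraph n := by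
  ext p q
  simp only [gridGraph, boxProd_adj, pathGraph_adj, Fin.ext_iff]
  tauto

theorem card_dart_gridGraph (m n : ℕ) :
    Nat.card (gridGraph m n).Dart = 2 * (n * (m - 1) + m * (n - 1)) := by
  rw [gridGraph_eq_boxProd, card_dart_boxProd, card_dart_pathGraph, card_dart_pathGraph,
    Nat.card_fin, Nat.card_fin]
  ring

theorem IsCompleteColoring.le_two_mul_sub_one_of_gridGraph {n k : ℕ}
    {c : Fin n × Fin n → Fin k} (hn : 0 < n) (hc : IsCompleteColoring (gridGraph n n) k c) :
    k ≤ 2 * n - 1 := by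
  have hdarts := hc.mul_sub_one_le_card_dart
  rw [card_dart_gridGraph] at hdarts
  by_contra! hk
  obtain ⟨m, rfl⟩ : ∃ m, n = m + 1 := ⟨n - 1, by omega⟩
  obtain ⟨j, rfl⟩ : ∃ j, k = 2 * m + 2 + j := ⟨k - (2 * m + 2), by omega⟩
  simp only [Nat.add_sub_cancel] at hdarts
  rw [show 2 * m + 2 + j - 1 = 2 * m + 1 + j by omega] at hdarts
  nlinarith

theorem exists_isCompleteColoring_gridGraph {n : ℕ} (h2 : 2 ≤ n) (h8 : n ≤ 8) :
    ∃ c, IsCompleteColoring (gridGraph n n) (2 * n - 1) c := by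
  -- searching the `4 n (n - 1)` darts instead of all pairs of vertices keeps the kernel check fast
  simp only [isCompleteColoring_iff_forall_exists_dart]
  interval_cases n
  · exact ⟨Function.uncurry (!![2, 2; 0, 1] : Matrix (Fin 2) (Fin 2) (Fin 3)), by decide +kernel⟩
  · exact ⟨Function.uncurry (!![3, 2, 1; 4, 0, 3; 2, 1, 4] : Matrix (Fin 3) (Fin 3) (Fin 5)),
      by decide +kernel⟩
  · exact ⟨Function.uncurry (!![3, 2, 1, 5; 6, 4, 3, 0; 2, 0, 6, 1; 5, 3, 5, 4] :
      Matrix (Fin 4) (Fin 4) (Fin 7)), by decide +kernel⟩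
  · exact ⟨Function.uncurry (!![6, 7, 5, 6, 0; 1, 8, 4, 3, 7; 4, 6, 0, 8, 2; 1, 2, 3, 5, 2;
      5, 0, 1, 7, 4] : Matrix (Fin 5) (Fin 5) (Fin 9)), by decide +kernel⟩
  · exact ⟨Function.uncurry (!![0, 9, 5, 4, 8, 10; 2, 8, 0, 4, 6, 5; 6, 7, 10, 3, 0, 7;
      10, 2, 9, 6, 1, 4; 10, 1, 7, 5, 3, 2; 4, 9, 3, 8, 1, 5] : Matrix (Fin 6) (Fin 6) (Fin 11)),
      by decide +kernel⟩
  · exact ⟨Function.uncurry (!![8, 10, 11, 1, 12, 8, 6; 11, 3, 2, 0, 6, 2, 5;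
      4, 9, 12, 4, 6, 9, 7; 11, 5, 0, 8, 7, 0, 10; 7, 12, 11, 9, 1, 3, 5; 4, 3, 6, 10, 2, 7, 1;
      5, 8, 1, 4, 4, 12, 10] : Matrix (Fin 7) (Fin 7) (Fin 13)), by decide +kernel⟩
  · exact ⟨Function.uncurry (!![1, 6, 7, 11, 1, 10, 2, 4; 5, 11, 14, 13, 7, 0, 9, 12;
      4, 12, 6, 5, 2, 11, 10, 1; 14, 10, 3, 7, 8, 4, 6, 9; 8, 5, 0, 4, 3, 1, 8, 11;
      1, 14, 2, 6, 13, 4, 9, 3; 2, 3, 13, 0, 8, 10, 7, 12; 12, 5, 9, 14, 12, 13, 1, 0] :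
      Matrix (Fin 8) (Fin 8) (Fin 15)), by decide +kernel⟩

/-- For every integer `n` with `2 ≤ n ≤ 8`, the complete coloring number of the
`n×n` square grid graph equals `2n − 1`. -/
theorem gamma_grid_small (n : ℕ) (h2 : 2 ≤ n) (h8 : n ≤ 8) :
    completeColoringNumber (gridGraph n n) = 2 * n - 1 :=
  completeColoringNumber_eq_of_forall_le (exists_isCompleteColoring_gridGraph h2 h8)
    fun _ _ hc => hc.le_two_mul_sub_one_of_gridGraph (by omega)
end

section
/- For every integer n with 3 ≤ n ≤ 7, the achromatic number and the complete coloring number of the n×n square grid graph coincide and equal 2n−1: Ψ(G_n) = Γ(G_n) = 2n−1. -/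
/-!
A `k`-complete coloring needs a separate edge for each of the `k.choose 2` pairs of colors, and
`G_n = P_n □ P_n` has `2n(n - 1)` edges; since `(2n).choose 2 = n(2n - 1) > 2n(n - 1)`, at most
`2n - 1` colors fit. For `3 ≤ n ≤ 7` the bound is attained by an explicit proper coloring,
checked by evaluation.
-/

open SimpleGraph Finset

theorem IsCompleteColoring.choose_two_le_ncard_edgeSet {V : Type*} [Finite V] {G : SimpleGraph V}
    {k : ℕ} {c : V → Fin k} (hc : IsCompleteColoring G k c) : k.choose 2 ≤ G.edgeSet.ncard := by
  have hsurj : (⊤ : SimpleGraph (Fin k)).edgeSet ⊆ Sym2.map c '' G.edgeSet := by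
    intro e he
    induction e using Sym2.ind with
    | _ i j =>
      obtain ⟨u, v, huv, rfl, rfl⟩ := hc i j he
      exact ⟨s(u, v), huv, rfl⟩
  calc k.choose 2 = (⊤ : SimpleGraph (Fin k)).edgeSet.ncard := by
        rw [Set.ncard_eq_toFinset_card', ← edgeFinset, card_edgeFinset_top_eq_card_choose_two,
          Fintype.card_fin]
    _ ≤ (Sym2.map c '' G.edgeSet).ncard := Set.ncard_le_ncard hsurj (Set.toFinite _)
    _ ≤ G.edgeSet.ncard := Set.ncard_image_le (Set.toFinite _)

theorem ncard_edgeSet_boxProd {α β : Type*} [Finite α] [Finite β] (G : SimpleGraph α)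
    (H : SimpleGraph β) :
    (G □ H).edgeSet.ncard = G.edgeSet.ncard * Nat.card β + Nat.card α * H.edgeSet.ncard := by
  classical
  have := Fintype.ofFinite α
  have := Fintype.ofFinite β
  rw [← coe_edgeFinset, ← coe_edgeFinset G, ← coe_edgeFinset H]
  simp only [Set.ncard_coe_finset, Nat.card_eq_fintype_card]
  apply Nat.eq_of_mul_eq_mul_left two_pos
  rw [← sum_degrees_eq_twice_card_edges]
  simp_rw [degree_boxProd]
  rw [Fintype.sum_prod_type' (f := fun a b => G.degree a + H.degree b)]
  simp only [sum_add_distrib, sum_const, card_univ, smul_eq_mul, ← mul_sum,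
    sum_degrees_eq_twice_card_edges]
  ring

theorem ncard_edgeSet_pathGraph (n : ℕ) : (pathGraph n).edgeSet.ncard = n - 1 := by
  cases n with
  | zero => simp [Set.eq_empty_of_isEmpty]
  | succ m =>
    have hrange : (pathGraph (m + 1)).edgeSet = Set.range fun i : Fin m => s(i.castSucc, i.succ) := by
      ext e
      induction e using Sym2.ind with
      | _ u v =>
        simp only [mem_edgeSet, pathGraph_adj, Set.mem_range, Sym2.eq_iff, Fin.ext_iff,
          Fin.val_castSucc, Fin.val_succ]
        constructor
        · rintro (h | h)
          · exact ⟨⟨u, by omega⟩, Or.inl ⟨rfl, h⟩⟩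
          · exact ⟨⟨v, by omega⟩, Or.inr ⟨rfl, h⟩⟩
        · rintro ⟨i, ⟨h1, h2⟩ | ⟨h1, h2⟩⟩ <;> omega
    rw [hrange, Set.ncard_range_of_injective, Nat.card_eq_fintype_card, Fintype.card_fin,
      Nat.add_sub_cancel]
    intro i j hij
    simp only [Sym2.eq_iff, Fin.ext_iff, Fin.val_castSucc, Fin.val_succ] at hij
    exact Fin.ext (by omega)

theorem ncard_edgeSet_gridGraph (m n : ℕ) :
    (gridGraph m n).edgeSet.ncard = (m - 1) * n + m * (n - 1) := by
  rw [gridGraph_eq_boxProd, ncard_edgeSet_boxProd, ncard_edgeSet_pathGraph, ncard_edgeSet_pathGraph,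
    Nat.card_fin, Nat.card_fin]

theorem le_two_mul_sub_one_of_isCompleteColoring_gridGraph {n k : ℕ} (hn : 1 ≤ n)
    {c : Fin n × Fin n → Fin k} (hc : IsCompleteColoring (gridGraph n n) k c) :
    k ≤ 2 * n - 1 := by
  have hedges := hc.choose_two_le_ncard_edgeSet
  rw [ncard_edgeSet_gridGraph] at hedges
  obtain ⟨m, rfl⟩ : ∃ m, n = m + 1 := ⟨n - 1, by omega⟩
  by_contra! hk
  have hchoose := Nat.add_one_mul_choose_eq (2 * m + 1) 1
  rw [Nat.choose_one_right] at hchoose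
  have hmono := Nat.choose_le_choose 2 (show 2 * m + 1 + 1 ≤ k by omega)
  simp only [Nat.add_sub_cancel] at hedges
  nlinarith

theorem achromaticNumber_eq_and_completeColoringNumber_eq {V : Type*} {G : SimpleGraph V} {k : ℕ}
    (hle : ∀ j (c : V → Fin j), IsCompleteColoring G j c → j ≤ k)
    (hk : ∃ c : V → Fin k, IsCompleteProperColoring G k c) :
    achromaticNumber G = k ∧ completeColoringNumber G = k := by
  obtain ⟨c, hc⟩ := hk
  exact ⟨IsGreatest.csSup_eq ⟨⟨c, hc⟩, fun j ⟨c', hc'⟩ => hle j c' hc'.1⟩,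
    IsGreatest.csSup_eq ⟨⟨c, hc.1⟩, fun j ⟨c', hc'⟩ => hle j c' hc'⟩⟩

instance inst_s7 (m n : ℕ) : DecidableRel (gridGraph m n).Adj :=
  fun _ _ => by dsimp only [gridGraph]; infer_instance

-- Testing `c u = i` before scanning the neighbours of `u` keeps the evaluation small.
instance {V : Type*} [Fintype V] [DecidableEq V] (G : SimpleGraph V) [DecidableRel G.Adj] (k : ℕ)
    (c : V → Fin k) : Decidable (IsCompleteColoring G k c) :=
  decidable_of_iff (∀ i j : Fin k, i ≠ j → ∃ u, c u = i ∧ ∃ v, G.Adj u v ∧ c v = j) <|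
    forall₂_congr fun _ _ => imp_congr_right fun _ =>
      ⟨fun ⟨u, hu, v, h, hv⟩ => ⟨u, v, h, hu, hv⟩, fun ⟨u, v, h, hu, hv⟩ => ⟨u, hu, v, h, hv⟩⟩

instance {V : Type*} [Fintype V] [DecidableEq V] (G : SimpleGraph V) [DecidableRel G.Adj] (k : ℕ)
    (c : V → Fin k) : Decidable (IsCompleteProperColoring G k c) :=
  inferInstanceAs (Decidable (_ ∧ _))

def gridColoring3 : Matrix (Fin 3) (Fin 3) (Fin 5) :=
  !![0, 1, 2;
     4, 3, 0;
     1, 2, 4]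

def gridColoring4 : Matrix (Fin 4) (Fin 4) (Fin 7) :=
  !![5, 1, 6, 2;
     2, 3, 5, 0;
     0, 6, 4, 3;
     4, 2, 1, 0]

def gridColoring5 : Matrix (Fin 5) (Fin 5) (Fin 9) :=
  !![3, 8, 5, 6, 2;
     5, 0, 1, 7, 8;
     4, 7, 5, 2, 1;
     6, 3, 6, 0, 3;
     1, 4, 8, 4, 2]

def gridColoring6 : Matrix (Fin 6) (Fin 6) (Fin 11) :=
  !![10,  5,  2,  3,  4, 10;
      8,  9,  7,  8,  5,  3;
      3,  2,  0,  4,  9,  1;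
      7,  1,  5,  7,  6,  2;
      2,  8,  6, 10,  1,  4;
     10,  0,  3,  9,  0,  6]

def gridColoring7 : Matrix (Fin 7) (Fin 7) (Fin 13) :=
  !![ 8,  6, 10,  2,  7,  0,  8;
      3,  5, 11,  8,  5,  9,  7;
      0,  2, 10,  1,  0, 12,  4;
      4,  9,  8, 12,  7, 11,  1;
     11,  3,  4,  5, 10,  9,  6;
      2, 12,  6,  1,  3,  1,  7;
      4, 10,  0, 11,  6,  2,  3]

theorem exists_isCompleteProperColoring_gridGraph {n : ℕ} (h3 : 3 ≤ n) (h7 : n ≤ 7) :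
    ∃ c : Fin n × Fin n → Fin (2 * n - 1), IsCompleteProperColoring (gridGraph n n) (2 * n - 1) c := by
  interval_cases n
  · exact ⟨Function.uncurry gridColoring3, by decide +kernel⟩
  · exact ⟨Function.uncurry gridColoring4, by decide +kernel⟩
  · exact ⟨Function.uncurry gridColoring5, by decide +kernel⟩
  · exact ⟨Function.uncurry gridColoring6, by decide +kernel⟩
  · exact ⟨Function.uncurry gridColoring7, by decide +kernel⟩

/-- For every `n` with `3 ≤ n ≤ 7`, `Ψ(G_n) = Γ(G_n) = 2n − 1`. -/
theorem psi_eq_gamma_grid_small (n : ℕ) (h3 : 3 ≤ n) (h7 : n ≤ 7) :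
    achromaticNumber (gridGraph n n) = 2 * n - 1 ∧
    completeColoringNumber (gridGraph n n) = 2 * n - 1 :=
  achromaticNumber_eq_and_completeColoringNumber_eq
    (fun _ _ hc => le_two_mul_sub_one_of_isCompleteColoring_gridGraph (by omega) hc)
    (exists_isCompleteProperColoring_gridGraph h3 h7)
end

section
/- For every integer n ≥ 2, the complete coloring number and the achromatic number of the path with n edges coincide: Γ(P_n) = Ψ(P_n). -/
/-- The `n`-path `P_n`: vertices `{0, 1, …, n}`, adjacent iff they differ by 1. -/
def pathGraph (n : ℕ) : SimpleGraph (Fin (n + 1)) where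
  Adj u v := (u : ℕ) + 1 = v ∨ (v : ℕ) + 1 = u
  symm := ⟨by rintro u v (h | h) <;> [exact Or.inr h; exact Or.inl h]⟩
  loopless := ⟨by rintro u (h | h) <;> omega⟩

/-! A complete coloring of `P_n` is a word of length `n + 1` in which every pair of distinct
colors occurs as two adjacent letters. Deleting repeated adjacent letters keeps all these pairs
and makes the coloring proper; the shorter word is then padded back to length `n + 1` by
prepending, again and again, its second letter, which keeps it proper. So every number `k ≥ 2` of
colors of a complete coloring is also that of a complete proper one. Smaller `k` are dominated by
the complete proper parity 2-coloring when `n ≥ 1`, and every coloring of the edgeless `P_0` is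
proper. -/

namespace List
variable {α : Type*} {a b x y : α}

theorem pair_infix_cons_cons_iff {l : List α} :
    [a, b] <:+: x :: y :: l ↔ a = x ∧ b = y ∨ [a, b] <:+: y :: l := by
  rw [infix_cons_iff]; simp

theorem pair_infix_iff_getElem {l : List α} :
    [a, b] <:+: l ↔ ∃ (i : ℕ) (h : i + 1 < l.length), l[i] = a ∧ l[i + 1] = b := by
  induction l with
  | nil => simp
  | cons x t ih =>
    cases t with
    | nil => simpa using fun h : [a, b] <:+: [x] => by simpa using h.length_le
    | cons y t =>
      rw [pair_infix_cons_cons_iff, ih]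
      constructor
      · rintro (⟨rfl, rfl⟩ | ⟨i, hi, h⟩)
        · exact ⟨0, by simp, rfl, rfl⟩
        · exact ⟨i + 1, by simp at hi ⊢; omega, h⟩
      · rintro ⟨_ | i, hi, h⟩
        · simp at h; exact Or.inl ⟨h.1.symm, h.2.symm⟩
        · exact Or.inr ⟨i, by simp at hi ⊢; omega, h⟩

theorem exists_destutter'_eq_cons (R : α → α → Prop) [DecidableRel R] (x : α) (l : List α) :
    ∃ t, l.destutter' R x = x :: t := by
  induction l with
  | nil => exact ⟨[], rfl⟩
  | cons y l ih =>
    rw [destutter'_cons]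
    split
    · exact ⟨_, rfl⟩
    · exact ih

theorem exists_isChain_length_eq_suffix {R : α → α → Prop} [Std.Symm R] {d : List α}
    (hd : d.IsChain R) (h2 : 2 ≤ d.length) {N : ℕ} (hN : d.length ≤ N) :
    ∃ L : List α, L.length = N ∧ L.IsChain R ∧ d <:+ L := by
  induction N, hN using Nat.le_induction with
  | base => exact ⟨d, rfl, hd, suffix_refl d⟩
  | succ N _ ih =>
    obtain ⟨L, hL, hc, hs⟩ := ih
    match L, hc with
    | x :: y :: t, hc =>
      refine ⟨y :: x :: y :: t, by simp_all, ?_, hs.trans (suffix_cons _ _)⟩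
      exact isChain_cons_cons.2 ⟨symm (isChain_cons_cons.1 hc).1, hc⟩
    | [], _ | [_], _ => simp at hL; omega

variable [DecidableEq α]

theorem pair_infix_destutter'_ne {l : List α} (h : [a, b] <:+: x :: l) (hab : a ≠ b) :
    [a, b] <:+: l.destutter' (· ≠ ·) x := by
  induction l generalizing x with
  | nil => simpa using h.length_le
  | cons y l ih =>
    rw [destutter'_cons]
    rcases pair_infix_cons_cons_iff.1 h with ⟨rfl, rfl⟩ | h
    · obtain ⟨t, ht⟩ := exists_destutter'_eq_cons (· ≠ ·) b l
      rw [if_pos hab, ht]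
      exact (prefix_append [a, b] t).isInfix
    · split_ifs with hxy
      · exact infix_cons (ih h)
      · rw [not_not.1 hxy]; exact ih h

theorem pair_infix_destutter_ne {l : List α} (h : [a, b] <:+: l) (hab : a ≠ b) :
    [a, b] <:+: l.destutter (· ≠ ·) := by
  cases l with
  | nil => simp at h
  | cons x l => exact pair_infix_destutter'_ne h hab

end List

section PathColoring

variable {n k : ℕ}

theorem exists_pathGraph_adj_iff_pair_infix_ofFn {α : Type*} (c : Fin (n + 1) → α) (a b : α) :
    (∃ u v, (pathGraph n).Adj u v ∧ c u = a ∧ c v = b) ↔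
      [a, b] <:+: List.ofFn c ∨ [b, a] <:+: List.ofFn c := by
  simp only [List.pair_infix_iff_getElem, List.length_ofFn, List.getElem_ofFn]
  constructor
  · rintro ⟨u, v, (h | h), rfl, rfl⟩
    · exact Or.inl ⟨u, by omega, rfl, by congr⟩
    · exact Or.inr ⟨v, by omega, rfl, by congr⟩
  · rintro (⟨i, hi, rfl, rfl⟩ | ⟨i, hi, rfl, rfl⟩)
    · exact ⟨⟨i, by omega⟩, ⟨i + 1, hi⟩, Or.inl rfl, rfl, rfl⟩
    · exact ⟨⟨i + 1, hi⟩, ⟨i, by omega⟩, Or.inr rfl, rfl, rfl⟩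

theorem isCompleteColoring_pathGraph_iff (c : Fin (n + 1) → Fin k) :
    IsCompleteColoring (pathGraph n) k c ↔
      ∀ i j : Fin k, i ≠ j → [i, j] <:+: List.ofFn c ∨ [j, i] <:+: List.ofFn c := by
  simp only [IsCompleteColoring, exists_pathGraph_adj_iff_pair_infix_ofFn]

theorem forall_pathGraph_adj_ne_iff_isChain_ofFn {α : Type*} (c : Fin (n + 1) → α) :
    (∀ u v, (pathGraph n).Adj u v → c u ≠ c v) ↔ (List.ofFn c).IsChain (· ≠ ·) := by
  rw [List.isChain_ofFn]
  constructor
  · exact fun h i hi => h _ _ (Or.inl rfl)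
  · rintro h u v (huv | huv)
    · obtain ⟨v, hv⟩ := v
      subst huv
      exact h u hv
    · obtain ⟨u, hu⟩ := u
      subst huv
      exact (h v hu).symm

theorem exists_isCompleteProperColoring_pathGraph_of_list (hk : 2 ≤ k) (d : List (Fin k))
    (hchain : d.IsChain (· ≠ ·)) (hlen : d.length ≤ n + 1)
    (hpairs : ∀ i j : Fin k, i ≠ j → [i, j] <:+: d ∨ [j, i] <:+: d) :
    ∃ c, IsCompleteProperColoring (pathGraph n) k c := by
  have h2 : 2 ≤ d.length := by
    rcases hpairs ⟨0, by omega⟩ ⟨1, by omega⟩ (by simp) with h | h <;> simpa using h.length_le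
  obtain ⟨L, hL, hLchain, hdL⟩ := List.exists_isChain_length_eq_suffix hchain h2 hlen
  obtain ⟨c, rfl⟩ : ∃ c : Fin (n + 1) → Fin k, List.ofFn c = L :=
    ⟨fun v => L[v.val], List.ext_getElem (by simp [hL]) fun i _ _ => by rw [List.getElem_ofFn]⟩
  refine ⟨c, (isCompleteColoring_pathGraph_iff c).2 fun i j hij => ?_,
    (forall_pathGraph_adj_ne_iff_isChain_ofFn c).2 hLchain⟩
  exact (hpairs i j hij).imp (·.trans hdL.isInfix) (·.trans hdL.isInfix)

theorem IsCompleteColoring.exists_isCompleteProperColoring_pathGraph (hk : 2 ≤ k)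
    {c : Fin (n + 1) → Fin k} (hc : IsCompleteColoring (pathGraph n) k c) :
    ∃ c', IsCompleteProperColoring (pathGraph n) k c' := by
  refine exists_isCompleteProperColoring_pathGraph_of_list hk ((List.ofFn c).destutter (· ≠ ·))
    (List.isChain_destutter _ _) ?_ fun i j hij => ?_
  · simpa using (List.destutter_sublist _ (List.ofFn c)).length_le
  · exact ((isCompleteColoring_pathGraph_iff c).1 hc i j hij).imp
      (List.pair_infix_destutter_ne · hij) (List.pair_infix_destutter_ne · hij.symm)

theorem exists_isCompleteProperColoring_pathGraph_two (hn : 1 ≤ n) :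
    ∃ c, IsCompleteProperColoring (pathGraph n) 2 c :=
  exists_isCompleteProperColoring_pathGraph_of_list le_rfl [0, 1] (by simp) (by simp; omega)
    (by decide)

theorem IsCompleteColoring.isCompleteProperColoring_pathGraph_zero {c : Fin 1 → Fin k}
    (hc : IsCompleteColoring (pathGraph 0) k c) : IsCompleteProperColoring (pathGraph 0) k c :=
  ⟨hc, fun u v h => by rcases h with h | h <;> omega⟩

end PathColoring

theorem gamma_eq_psi_path_general (n : ℕ) :
    completeColoringNumber (pathGraph n) = achromaticNumber (pathGraph n) := by
  refine csSup_eq_csSup_of_forall_exists_le ?_ fun k ⟨c, hc⟩ => ⟨k, ⟨c, hc.1⟩, le_rfl⟩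
  rintro k ⟨c, hc⟩
  by_cases hk : 2 ≤ k
  · exact ⟨k, hc.exists_isCompleteProperColoring_pathGraph hk, le_rfl⟩
  rcases Nat.eq_zero_or_pos n with rfl | hn
  · exact ⟨k, ⟨c, hc.isCompleteProperColoring_pathGraph_zero⟩, le_rfl⟩
  · exact ⟨2, exists_isCompleteProperColoring_pathGraph_two hn, by omega⟩

/-- For every `n ≥ 2`, `Γ(P_n) = Ψ(P_n)`. -/
theorem gamma_eq_psi_path (n : ℕ) (hn : 2 ≤ n) :
    completeColoringNumber (pathGraph n) = achromaticNumber (pathGraph n) :=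
  gamma_eq_psi_path_general n
end

section
/- Let k ≥ 2 and set M = 3k/2 if k is even and M = (3k−1)/2 if k is odd. Then there exists a coloring c : V(P_M) → {1,…,k+1} of the path P_M such that for every color i ∈ {1,…,k} there is an edge {u,v} of P_M with c(u) = i and c(v) = k+1. -/
/-! Split the path into blocks of three vertices `3m, 3m+1, 3m+2` colored `2m, ⋆, 2m+1`,
where `⋆` is the extra color: the middle vertex of each block realizes the pairs of `⋆` with
`2m` and `2m+1`, so `⌈k/2⌉` blocks, about `3k/2` vertices, realize all `k` pairs. -/

namespace PathExtension

def slot (i : ℕ) : ℕ := 3 * (i / 2) + 2 * (i % 2)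

def hub (i : ℕ) : ℕ := 3 * (i / 2) + 1

def blockColoring (k j : ℕ) : Fin (k + 1) :=
  if j % 3 = 1 then Fin.last k else Fin.ofNat (k + 1) (2 * (j / 3) + j % 3 / 2)

theorem blockColoring_hub (k i : ℕ) : blockColoring k (hub i) = Fin.last k := by
  rw [blockColoring, if_pos (by unfold hub; omega)]

theorem blockColoring_slot (k : ℕ) (i : Fin (k + 1)) : blockColoring k (slot i) = i := by
  have hslot : slot i % 3 ≠ 1 ∧ 2 * (slot i / 3) + slot i % 3 / 2 = i := by
    unfold slot; omega
  rw [blockColoring, if_neg hslot.1, hslot.2, Fin.ofNat_val_eq_self]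

theorem slot_adj_hub (i : ℕ) : slot i + 1 = hub i ∨ hub i + 1 = slot i := by
  unfold slot hub; omega

theorem slot_le_and_hub_le {k i M : ℕ} (hik : i < k)
    (hM : M = if Even k then 3 * k / 2 else (3 * k - 1) / 2) :
    slot i ≤ M ∧ hub i ≤ M := by
  unfold slot hub
  split_ifs at hM with hk
  · obtain ⟨m, rfl⟩ := hk
    omega
  · obtain ⟨m, rfl⟩ := Nat.not_even_iff_odd.mp hk
    omega

end PathExtension

theorem path_extension_coloring_general (k : ℕ)
    (M : ℕ) (hM : M = if Even k then 3 * k / 2 else (3 * k - 1) / 2) :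
    ∃ c : Fin (M + 1) → Fin (k + 1),
      ∀ i : Fin (k + 1), i ≠ Fin.last k →
        ∃ u v, (pathGraph M).Adj u v ∧ c u = i ∧ c v = Fin.last k := by
  refine ⟨fun u => PathExtension.blockColoring k u, fun i hi => ?_⟩
  obtain ⟨hslot, hhub⟩ := PathExtension.slot_le_and_hub_le (Fin.val_lt_last hi) hM
  exact ⟨⟨_, Nat.lt_succ_of_le hslot⟩, ⟨_, Nat.lt_succ_of_le hhub⟩,
    PathExtension.slot_adj_hub i, PathExtension.blockColoring_slot k i,
    PathExtension.blockColoring_hub k i⟩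

/-- For `k ≥ 2` and `M = 3k/2` (`k` even) or `M = (3k−1)/2` (`k` odd), there is
a coloring of `P_M` with colors `{1, …, k+1}` (here `Fin (k+1)`, the last color
playing the role of `k+1`) realizing every pair `(i, k+1)` with `i ∈ {1, …, k}`. -/
theorem path_extension_coloring (k : ℕ) (hk : 2 ≤ k)
    (M : ℕ) (hM : M = if Even k then 3 * k / 2 else (3 * k - 1) / 2) :
    ∃ c : Fin (M + 1) → Fin (k + 1),
      ∀ i : Fin (k + 1), i ≠ Fin.last k →
        ∃ u v, (pathGraph M).Adj u v ∧ c u = i ∧ c v = Fin.last k :=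
  path_extension_coloring_general k M hM
end

section
/- For every integer k ≥ 2, there exists a coloring of the 2-Ribbon L_{k+3} (the 2×(k+3) rectangular grid graph) with colors in {1,…,k+3} that realizes every pair of colors in ({1,…,k}×{k+1,k+2,k+3}) ∪ {(k+1,k+2),(k+1,k+3),(k+2,k+3)}; that is, for each such pair (a,b) there is an edge {u,v} of L_{k+3} with c(u)=a and c(v)=b. -/
/-!
Colour the cells of the ribbon like a chessboard. The cell `(i, j)` with `i + j` even gets the
special colour `k + j % 3`, so the three special colours `k, k + 1, k + 2` cycle along the
columns; the odd cells of columns `1, …, k` get the ordinary colours `0, …, k - 1`, and the odd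
cells of columns `0` and `k + 1` get the special colours `k + 2` and `k`. An odd cell in an inner
column `j` has even neighbours in the three consecutive columns `j - 1, j, j + 1`, hence one of
each special colour. The two remaining special pairs occur at the left end of the ribbon.
-/

lemma gridGraph_adj_parity {m n : ℕ} {p q : Fin m × Fin n} (h : (gridGraph m n).Adj p q) :
    ((q.1 : ℕ) + q.2) % 2 ≠ ((p.1 : ℕ) + p.2) % 2 := by
  rcases h with ⟨h, h' | h'⟩ | ⟨h, h' | h'⟩ <;> rw [Fin.ext_iff] at h <;> omega

lemma gridGraph_two_exists_adj_col {n : ℕ} (p : Fin 2 × Fin n) {j : ℕ} (hj : j < n)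
    (hle : (p.2 : ℕ) ≤ j + 1) (hge : j ≤ p.2 + 1) :
    ∃ q, (gridGraph 2 n).Adj p q ∧ (q.2 : ℕ) = j := by
  by_cases hcol : j = p.2
  · refine ⟨(⟨1 - p.1, by omega⟩, p.2), Or.inr ⟨rfl, ?_⟩, hcol.symm⟩
    have := p.1.isLt
    simp only
    omega
  · exact ⟨(p.1, ⟨j, hj⟩), Or.inl ⟨rfl, by simp only; omega⟩, rfl⟩

def ribbonColor (k i j : ℕ) : ℕ :=
  if (i + j) % 2 = 0 then k + j % 3
  else if j = 0 then k + 2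
  else if j ≤ k then j - 1
  else if j = k + 1 then k
  else 0

section ribbonColor

variable {k i j : ℕ}

lemma ribbonColor_lt : ribbonColor k i j < k + 3 := by
  unfold ribbonColor
  split_ifs <;> omega

lemma ribbonColor_of_even (h : (i + j) % 2 = 0) : ribbonColor k i j = k + j % 3 := if_pos h

lemma ribbonColor_of_odd (h : (i + j) % 2 = 1) (h1 : 1 ≤ j) (hk : j ≤ k) :
    ribbonColor k i j = j - 1 := by
  unfold ribbonColor
  split_ifs <;> omega

lemma ribbonColor_of_odd_of_eq_succ (h : (i + j) % 2 = 1) (hj : j = k + 1) :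
    ribbonColor k i j = k := by
  unfold ribbonColor
  split_ifs <;> omega

lemma ribbonColor_one_zero : ribbonColor k 1 0 = k + 2 := rfl

end ribbonColor

lemma exists_adj_ribbonColor_eq_special {k : ℕ} (p : Fin 2 × Fin (k + 3))
    (hodd : ((p.1 : ℕ) + p.2) % 2 = 1) (h1 : 1 ≤ (p.2 : ℕ)) (hk : (p.2 : ℕ) ≤ k + 1)
    {t : ℕ} (ht : t < 3) :
    ∃ q, (gridGraph 2 (k + 3)).Adj p q ∧ ribbonColor k q.1 q.2 = k + t := by
  -- the column among `p.2 - 1, p.2, p.2 + 1` that is congruent to `t` mod 3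
  obtain ⟨q, hadj, hcol⟩ := gridGraph_two_exists_adj_col p
    (j := p.2 - 1 + (t + 3 - (p.2 - 1) % 3) % 3) (by omega) (by omega) (by omega)
  have heven : ((q.1 : ℕ) + q.2) % 2 = 0 := by
    have := gridGraph_adj_parity hadj
    omega
  refine ⟨q, hadj, ?_⟩
  rw [ribbonColor_of_even heven, hcol]
  omega

lemma exists_adj_ribbonColor {k a b : ℕ} (hb : b < k + 3)
    (hab : (a < k ∧ k ≤ b) ∨ (k ≤ a ∧ k ≤ b ∧ a < b)) :
    ∃ u v : Fin 2 × Fin (k + 3), (gridGraph 2 (k + 3)).Adj u v ∧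
      ribbonColor k u.1 u.2 = a ∧ ribbonColor k v.1 v.2 = b := by
  rcases hab with ⟨ha, hkb⟩ | ⟨hka, -, hlt⟩
  · let u : Fin 2 × Fin (k + 3) := (⟨a % 2, by omega⟩, ⟨a + 1, by omega⟩)
    have hodd : ((u.1 : ℕ) + u.2) % 2 = 1 := by simp only [u]; omega
    obtain ⟨v, hadj, hv⟩ :=
      exists_adj_ribbonColor_eq_special u hodd (by simp [u]) (by simp only [u]; omega)
        (t := b - k) (by omega)
    exact ⟨u, v, hadj, ribbonColor_of_odd hodd (by simp [u]) (by simp only [u]; omega),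
      by omega⟩
  · obtain rfl | rfl : k = a ∨ a = k + 1 := by omega
    · obtain rfl | rfl : b = k + 1 ∨ b = k + 2 := by omega
      · let u : Fin 2 × Fin (k + 3) := (⟨k % 2, by omega⟩, ⟨k + 1, by omega⟩)
        have hodd : ((u.1 : ℕ) + u.2) % 2 = 1 := by simp only [u]; omega
        obtain ⟨v, hadj, hv⟩ :=
          exists_adj_ribbonColor_eq_special u hodd (by simp [u]) le_rfl (t := 1) (by omega)
        exact ⟨u, v, hadj, ribbonColor_of_odd_of_eq_succ hodd rfl, hv⟩
      · exact ⟨(0, 0), (1, 0), Or.inr ⟨rfl, Or.inl rfl⟩, rfl, ribbonColor_one_zero⟩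
    · obtain rfl : b = k + 2 := by omega
      exact ⟨(1, ⟨1, by omega⟩), (1, 0), Or.inl ⟨rfl, Or.inr rfl⟩, ribbonColor_of_even (by simp),
        ribbonColor_one_zero⟩

theorem ribbon_coloring_general (k : ℕ) :
    ∃ c : Fin 2 × Fin (k + 3) → Fin (k + 3),
      ∀ a b : Fin (k + 3),
        ((a : ℕ) < k ∧ k ≤ (b : ℕ)) ∨ (k ≤ (a : ℕ) ∧ k ≤ (b : ℕ) ∧ (a : ℕ) < (b : ℕ)) →
        ∃ u v, (gridGraph 2 (k + 3)).Adj u v ∧ c u = a ∧ c v = b := by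
  refine ⟨fun p => ⟨ribbonColor k p.1 p.2, ribbonColor_lt⟩, fun a b hab => ?_⟩
  obtain ⟨u, v, hadj, hu, hv⟩ := exists_adj_ribbonColor b.isLt hab
  exact ⟨u, v, hadj, Fin.ext hu, Fin.ext hv⟩

/-- For every `k ≥ 2` there is a coloring of the 2-Ribbon `L_{k+3}` (the
`2×(k+3)` grid) with colors `{1, …, k+3}` (here `Fin (k+3)`, the first `k`
values playing the role of `{1,…,k}` and the last three that of
`{k+1, k+2, k+3}`) realizing every pair in
`{1,…,k} × {k+1,k+2,k+3}` together with the three pairs among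
`{k+1, k+2, k+3}`. -/
theorem ribbon_coloring (k : ℕ) (hk : 2 ≤ k) :
    ∃ c : Fin 2 × Fin (k + 3) → Fin (k + 3),
      ∀ a b : Fin (k + 3),
        ((a : ℕ) < k ∧ k ≤ (b : ℕ)) ∨ (k ≤ (a : ℕ) ∧ k ≤ (b : ℕ) ∧ (a : ℕ) < (b : ℕ)) →
        ∃ u v, (gridGraph 2 (k + 3)).Adj u v ∧ c u = a ∧ c v = b :=
  ribbon_coloring_general k
end

section
/- Copy and Paste Lemma: let R₁ and R₂ be rectangular grid graphs of dimensions m₁×n₁ and m₂×n₂ respectively, let A be a set of pairs of colors from {1,…,k₀}, and let c₁ be a partial coloring of R₁ (a function assigning colors in {1,…,k₀} to some subset of the vertices of R₁) that realizes every pair in A. If there exists a positive integer k with k·m₁ ≤ m₂ and n₁ + (k−1) ≤ k·n₂, then there exists a partial coloring c₂ of R₂ with colors in {1,…,k₀} that also realizes every pair in A. -/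
/-- A partial coloring (a coloring of some subset of the vertices, encoded via
`Option`) realizes the pair of colors `(a, b)` if some edge joins a vertex
colored `a` to a vertex colored `b`. -/
def PartialRealizes {V : Type*} {k₀ : ℕ} (G : SimpleGraph V) (c : V → Option (Fin k₀))
    (a b : Fin k₀) : Prop :=
  ∃ u v, G.Adj u v ∧ c u = some a ∧ c v = some b

/-!
Cut the columns of the small grid into `k` windows of width `n₂` starting at the columns
`t * (n₂ - 1)`, so that consecutive windows overlap in one column, and paste window `t` into the
`t`-th block of `m₁` rows of the large grid. Every edge of the small grid lies inside a single
window, hence reappears as an edge of the large grid between vertices carrying the same colors.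
-/

section

variable {V W : Type*} {k₀ : ℕ}

def EdgeCovering (H : SimpleGraph W) (G : SimpleGraph V) (g : W → Option V) : Prop :=
  ∀ u v, G.Adj u v → ∃ u' v', H.Adj u' v' ∧ g u' = some u ∧ g v' = some v

theorem PartialRealizes.bind {G : SimpleGraph V} {H : SimpleGraph W} {g : W → Option V}
    (hg : EdgeCovering H G g) {c : V → Option (Fin k₀)} {a b : Fin k₀}
    (h : PartialRealizes G c a b) : PartialRealizes H (fun w => (g w).bind c) a b := by
  obtain ⟨u, v, huv, hu, hv⟩ := h
  obtain ⟨u', v', huv', hu', hv'⟩ := hg u v huv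
  exact ⟨u', v', huv', by simp [hu', hu], by simp [hv', hv]⟩

end

theorem exists_window_of_le_succ {n₁ n₂ k a b : ℕ} (hn : n₁ + (k - 1) ≤ k * n₂)
    (hab : a ≤ b) (hba : b ≤ a + 1) (hb : b < n₁) :
    ∃ t < k, t * (n₂ - 1) ≤ a ∧ b < t * (n₂ - 1) + n₂ := by
  have hk : 0 < k := by rcases k with _ | k <;> simp at hn ⊢; omega
  obtain ⟨s, rfl⟩ : ∃ s, n₂ = s + 1 := ⟨n₂ - 1, by rcases n₂ with _ | _ <;> simp at hn ⊢; omega⟩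
  simp only [add_tsub_cancel_right, mul_add_one] at hn ⊢
  rcases Nat.eq_zero_or_pos s with rfl | hs
  · exact ⟨0, hk, by simp, by simp at hn; omega⟩
  rcases lt_or_ge (a / s) k with h | h
  · refine ⟨a / s, h, Nat.div_mul_le_self a s, ?_⟩
    have := Nat.lt_div_mul_add (a := a) hs
    omega
  · refine ⟨k - 1, by omega, ?_, ?_⟩
    · calc (k - 1) * s ≤ a / s * s := Nat.mul_le_mul_right s (by omega)
        _ ≤ a := Nat.div_mul_le_self a s
    · have : (k - 1) * s + s = k * s := by
        rw [← Nat.succ_mul, Nat.succ_eq_add_one, Nat.sub_add_cancel hk]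
      omega

def stripFold (m₁ n₁ s : ℕ) {m₂ n₂ : ℕ} (v : Fin m₂ × Fin n₂) : Option (Fin m₁ × Fin n₁) :=
  if h : (v.1 : ℕ) % m₁ < m₁ ∧ (v.1 : ℕ) / m₁ * s + v.2 < n₁ then
    some (⟨v.1 % m₁, h.1⟩, ⟨v.1 / m₁ * s + v.2, h.2⟩)
  else none

theorem stripFold_mk {m₁ n₁ s m₂ n₂ t i j : ℕ} (hi : i < m₁) (hj : t * s + j < n₁)
    (hx : t * m₁ + i < m₂) (hy : j < n₂) :
    stripFold m₁ n₁ s ((⟨t * m₁ + i, hx⟩, ⟨j, hy⟩) : Fin m₂ × Fin n₂) =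
      some (⟨i, hi⟩, ⟨t * s + j, hj⟩) := by
  have hm : 0 < m₁ := by omega
  have hmod : (t * m₁ + i) % m₁ = i := by rw [Nat.mul_comm, Nat.mul_add_mod, Nat.mod_eq_of_lt hi]
  have hdiv : (t * m₁ + i) / m₁ = t := by
    rw [Nat.mul_comm, Nat.mul_add_div hm, Nat.div_eq_of_lt hi, Nat.add_zero]
  simp only [stripFold, hmod, hdiv, dif_pos (And.intro hi hj)]

theorem stripFold_edgeCovering {m₁ n₁ m₂ n₂ k : ℕ} (hm : k * m₁ ≤ m₂)
    (hn : n₁ + (k - 1) ≤ k * n₂) :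
    EdgeCovering (gridGraph m₂ n₂) (gridGraph m₁ n₁) (stripFold m₁ n₁ (n₂ - 1)) := by
  rintro ⟨⟨ui, hui⟩, ⟨uj, huj⟩⟩ ⟨⟨vi, hvi⟩, ⟨vj, hvj⟩⟩ huv
  simp only [gridGraph, Fin.mk.injEq] at huv
  obtain ⟨t, ht, hta, htb⟩ := exists_window_of_le_succ (a := min uj vj) (b := max uj vj) hn
    (by omega) (by omega) (by omega)
  have hrows : (t + 1) * m₁ ≤ m₂ := (Nat.mul_le_mul_right m₁ ht).trans hm
  rw [Nat.succ_mul] at hrows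
  refine ⟨(⟨t * m₁ + ui, by omega⟩, ⟨uj - t * (n₂ - 1), by omega⟩),
    (⟨t * m₁ + vi, by omega⟩, ⟨vj - t * (n₂ - 1), by omega⟩), ?_, ?_, ?_⟩
  · simp only [gridGraph, Fin.mk.injEq]
    omega
  · rw [stripFold_mk hui (by omega)]
    congr
    omega
  · rw [stripFold_mk hvi (by omega)]
    congr
    omega

theorem copy_and_paste_general (m₁ n₁ m₂ n₂ k₀ : ℕ) (A : Set (Fin k₀ × Fin k₀))
    (c₁ : Fin m₁ × Fin n₁ → Option (Fin k₀))
    (h₁ : ∀ p ∈ A, PartialRealizes (gridGraph m₁ n₁) c₁ p.1 p.2)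
    (k : ℕ) (hm : k * m₁ ≤ m₂) (hn : n₁ + (k - 1) ≤ k * n₂) :
    ∃ c₂ : Fin m₂ × Fin n₂ → Option (Fin k₀),
      ∀ p ∈ A, PartialRealizes (gridGraph m₂ n₂) c₂ p.1 p.2 :=
  ⟨fun v => (stripFold m₁ n₁ (n₂ - 1) v).bind c₁,
    fun p hp => (h₁ p hp).bind (stripFold_edgeCovering hm hn)⟩

/-- Copy and Paste Lemma: if a partial coloring of the `m₁×n₁` grid realizes all
color pairs in `A`, and there is a positive integer `k` with `k·m₁ ≤ m₂` and
`n₁ + (k−1) ≤ k·n₂`, then there is a partial coloring of the `m₂×n₂` grid that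
also realizes all pairs in `A`. -/
theorem copy_and_paste (m₁ n₁ m₂ n₂ k₀ : ℕ) (A : Set (Fin k₀ × Fin k₀))
    (c₁ : Fin m₁ × Fin n₁ → Option (Fin k₀))
    (h₁ : ∀ p ∈ A, PartialRealizes (gridGraph m₁ n₁) c₁ p.1 p.2)
    (k : ℕ) (hk : 0 < k) (hm : k * m₁ ≤ m₂) (hn : n₁ + (k - 1) ≤ k * n₂) :
    ∃ c₂ : Fin m₂ × Fin n₂ → Option (Fin k₀),
      ∀ p ∈ A, PartialRealizes (gridGraph m₂ n₂) c₂ p.1 p.2 :=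
  copy_and_paste_general m₁ n₁ m₂ n₂ k₀ A c₁ h₁ k hm hn
end
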